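/- arXiv:2502.12518 — 3 statements merged into one kernel-verified Lean document; each statement's English description precedes it below -/
import Mathlib

section
/- For any two subspaces X, Y of F_q^n, the subspace distance d_S(X,Y) is at least the Hamming distance of their identifying vectors: d_S(X,Y) ≥ d_H(i(X), i(Y)). -/
/-- The subspace distance `d_S(X,Y) = dim(X+Y) - dim(X∩Y)`. -/
noncomputable def sdist {F : Type*} [Field F] {n : ℕ} (U V : Submodule F (Fin n → F)) : ℕ :=
  Module.finrank F ↥(U ⊔ V) - Module.finrank F ↥(U ⊓ V)

/-- The dimension of the projection of `X ⊆ F^n` onto its first `j` coordinates. -/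
noncomputable def dimUpTo {F : Type*} [Field F] {n : ℕ} (X : Submodule F (Fin n → F))
    (j : ℕ) (h : j ≤ n) : ℕ :=
  Module.finrank F ↥(X.map (LinearMap.funLeft F F (Fin.castLE h)))

/-- The identifying vector `i(X) ∈ F_2^n` of a subspace `X ⊆ F_q^n`: position `j` is a
pivot (a `1` of `i(X)`) exactly when the projection of `X` to the first `j+1` coordinates
has larger dimension than the projection to the first `j` coordinates, i.e. when column
`j` is a pivot column of the reduced row echelon form of a generator matrix of `X`. -/
noncomputable def iVec {F : Type*} [Field F] {n : ℕ} (X : Submodule F (Fin n → F))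
    (j : Fin n) : Bool :=
  decide (dimUpTo X ((j : ℕ) + 1) j.isLt ≠ dimUpTo X (j : ℕ) (le_of_lt j.isLt))

section AuxLemmas

open Module Submodule LinearMap

variable {F : Type*} [Field F]

lemma aux_finrank_map_eq_iff {M N : Type*} [AddCommGroup M] [Module F M]
    [AddCommGroup N] [Module F N] [FiniteDimensional F M]
    (f : M →ₗ[F] N) (S : Submodule F M) :
    Module.finrank F (S.map f) = Module.finrank F S ↔ Disjoint S (LinearMap.ker f) := by
  have h := LinearMap.finrank_range_add_finrank_ker (f.domRestrict S)
  rw [LinearMap.range_domRestrict, LinearMap.ker_domRestrict] at h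
  rw [Submodule.disjoint_iff_comap_eq_bot]
  constructor
  · intro he
    have h0 : finrank F (Submodule.comap S.subtype (LinearMap.ker f)) = 0 := by omega
    exact Submodule.finrank_eq_zero.mp h0
  · intro he
    rw [he, finrank_bot] at h
    omega

lemma aux_finrank_le_map_add {M N : Type*} [AddCommGroup M] [Module F M]
    [AddCommGroup N] [Module F N] [FiniteDimensional F M]
    (f : M →ₗ[F] N) (S : Submodule F M) :
    Module.finrank F S ≤ Module.finrank F (S.map f) + Module.finrank F (LinearMap.ker f) := by
  have h := LinearMap.finrank_range_add_finrank_ker (f.domRestrict S)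
  rw [LinearMap.range_domRestrict, LinearMap.ker_domRestrict] at h
  have h2 : finrank F (Submodule.comap S.subtype (LinearMap.ker f)) ≤
      finrank F (LinearMap.ker f) := by
    have e := (Submodule.equivMapOfInjective S.subtype (Submodule.injective_subtype S)
      (Submodule.comap S.subtype (LinearMap.ker f))).finrank_eq
    rw [e, Submodule.map_comap_subtype]
    exact Submodule.finrank_mono inf_le_right
  omega

/-- the "drop last coordinate" map -/
noncomputable abbrev dropLast (j : ℕ) : (Fin (j+1) → F) →ₗ[F] (Fin j → F) :=
  LinearMap.funLeft F F Fin.castSucc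

lemma finrank_ker_dropLast (j : ℕ) : finrank F (LinearMap.ker (dropLast (F := F) j)) = 1 := by
  have h := LinearMap.finrank_range_add_finrank_ker (dropLast (F := F) j)
  have hsurj : LinearMap.range (dropLast (F := F) j) = ⊤ :=
    LinearMap.range_eq_top.mpr
      (LinearMap.funLeft_surjective_of_injective F F _ (Fin.castSucc_injective j))
  rw [hsurj, finrank_top] at h
  simp only [Module.finrank_fin_fun] at h
  omega

lemma map_proj_succ {n : ℕ} (X : Submodule F (Fin n → F)) {j : ℕ} (hj : j < n) :
    X.map (LinearMap.funLeft F F (Fin.castLE (le_of_lt hj)))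
      = (X.map (LinearMap.funLeft F F (Fin.castLE hj))).map (dropLast j) := by
  rw [← Submodule.map_comp, ← LinearMap.funLeft_comp]
  rfl

lemma dimUpTo_mono_step {n : ℕ} (X : Submodule F (Fin n → F)) {j : ℕ} (hj : j < n) :
    dimUpTo X j (le_of_lt hj) ≤ dimUpTo X (j+1) hj ∧
      dimUpTo X (j+1) hj ≤ dimUpTo X j (le_of_lt hj) + 1 := by
  unfold dimUpTo
  rw [map_proj_succ X hj]
  constructor
  · exact Submodule.finrank_map_le _ _
  · have := aux_finrank_le_map_add (dropLast (F := F) j)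
      (X.map (LinearMap.funLeft F F (Fin.castLE hj)))
    rwa [finrank_ker_dropLast] at this

lemma iVec_mono {n : ℕ} {X Z : Submodule F (Fin n → F)} (hXZ : X ≤ Z) (j : Fin n)
    (h : iVec X j = true) : iVec Z j = true := by
  simp only [iVec, decide_eq_true_eq] at h ⊢
  unfold dimUpTo at *
  intro he
  apply h
  rw [map_proj_succ X j.isLt] at *
  rw [map_proj_succ Z j.isLt] at he
  have h1 := (aux_finrank_map_eq_iff (dropLast (F := F) (j : ℕ))
      (Z.map (LinearMap.funLeft F F (Fin.castLE j.isLt)))).mp he.symm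
  have h2 := aux_finrank_map_eq_iff (dropLast (F := F) (j : ℕ))
      (X.map (LinearMap.funLeft F F (Fin.castLE j.isLt)))
  exact (h2.mpr (h1.mono_left (Submodule.map_mono hXZ))).symm

lemma dimUpTo_zero {n : ℕ} (X : Submodule F (Fin n → F)) (h : 0 ≤ n) : dimUpTo X 0 h = 0 := by
  unfold dimUpTo
  have h1 := Submodule.finrank_le (X.map (LinearMap.funLeft F F (Fin.castLE h)))
  simpa using h1

lemma dimUpTo_top {n : ℕ} (X : Submodule F (Fin n → F)) : dimUpTo X n le_rfl = finrank F X := by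
  unfold dimUpTo
  have h1 : (LinearMap.funLeft F F (Fin.castLE (le_refl n))) = LinearMap.id := by
    ext g i
    rfl
  rw [h1, Submodule.map_id]

lemma card_iVec {n : ℕ} (X : Submodule F (Fin n → F)) :
    (Finset.univ.filter fun j : Fin n => iVec X j = true).card = finrank F X := by
  classical
  set c : ℕ → ℕ := fun j => if h : j < n then (if iVec X ⟨j, h⟩ then 1 else 0) else 0 with hc
  have key : ∀ m (hm : m ≤ n), dimUpTo X m hm = ∑ j ∈ Finset.range m, c j := by
    intro m
    induction m with
    | zero => intro hm; simpa using dimUpTo_zero X hm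
    | succ m ih =>
      intro hm
      have hmn : m < n := hm
      have hstep := dimUpTo_mono_step X hm
      rw [Finset.sum_range_succ, ← ih (le_of_lt hm)]
      have hcm : c m = if iVec X ⟨m, hm⟩ then 1 else 0 := by
        simp only [hc]; exact dif_pos hmn
      rw [hcm]
      rcases Bool.eq_false_or_eq_true (iVec X ⟨m, hm⟩) with hb | hb
      · have he : dimUpTo X (m+1) hm ≠ dimUpTo X m (le_of_lt hm) :=
          of_decide_eq_true hb
        rw [hb]
        simp only [if_pos]
        omega
      · have he : ¬ (dimUpTo X (m+1) hm ≠ dimUpTo X m (le_of_lt hm)) :=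
          of_decide_eq_false hb
        rw [hb, not_not.mp he]
        simp
  have h1 : finrank F X = ∑ j ∈ Finset.range n, c j := by
    rw [← key n le_rfl, dimUpTo_top]
  rw [Finset.card_filter, h1, ← Fin.sum_univ_eq_sum_range c n]
  refine Finset.sum_congr rfl fun j _ => ?_
  simp only [hc]
  rw [dif_pos j.isLt]

end AuxLemmas

/-- For any two subspaces `X, Y` of `F_q^n`, the subspace distance is at least the
Hamming distance of their identifying vectors: `d_S(X,Y) ≥ d_H(i(X), i(Y))`. -/
theorem sdist_ge_hamming_iVec {F : Type*} [Field F] [Fintype F] {n : ℕ}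
    (X Y : Submodule F (Fin n → F)) :
    (Finset.univ.filter fun j : Fin n => iVec X j ≠ iVec Y j).card ≤ sdist X Y := by
  classical
  open Module in
  set A := Finset.univ.filter fun j : Fin n => iVec X j = true with hA
  set B := Finset.univ.filter fun j : Fin n => iVec Y j = true with hB
  set C := Finset.univ.filter fun j : Fin n => iVec (X ⊔ Y) j = true with hC
  have hAc : A.card = Module.finrank F X := card_iVec X
  have hBc : B.card = Module.finrank F Y := card_iVec Y
  have hCc : C.card = Module.finrank F ↥(X ⊔ Y) := card_iVec _
  have hsub : A ∪ B ⊆ C := by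
    intro j hj
    simp only [hA, hB, hC, Finset.mem_union, Finset.mem_filter, Finset.mem_univ, true_and] at *
    rcases hj with h | h
    · exact iVec_mono le_sup_left j h
    · exact iVec_mono le_sup_right j h
  have huniv : (Finset.univ.filter fun j : Fin n => iVec X j ≠ iVec Y j) = (A ∪ B) \ (A ∩ B) := by
    ext j
    simp only [Finset.mem_filter, Finset.mem_univ, true_and, Finset.mem_sdiff,
      Finset.mem_union, Finset.mem_inter, hA, hB]
    cases hX : iVec X j <;> cases hY : iVec Y j <;> simp
  have hcard := Finset.card_union_add_card_inter A B
  have hsupinf := Submodule.finrank_sup_add_finrank_inf_eq X Y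
  have hle : (A ∪ B).card ≤ C.card := Finset.card_le_card hsub
  have hinter : A ∩ B ⊆ A ∪ B := (Finset.inter_subset_left).trans Finset.subset_union_left
  rw [huniv, Finset.card_sdiff_of_subset hinter]
  unfold sdist
  omega
end

section
/- If C_F ⊆ F_q^{k×(n-k)} is an (F, M, d)_q Ferrers diagram rank-metric code, then the lifted code L(C_F) = {X ∈ G_q(n,k) : F(X) = A_F for some A ∈ C_F} is an (n, M, 2d, {k})_q constant dimension code. -/
/-- Given a strictly increasing enumeration `e` of the `k` pivot columns and `c` of the
`n-k` non-pivot columns of an identifying vector, `liftMat e c A` is the `k×n` RREF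
generator matrix whose pivot columns form the identity pattern and whose non-pivot
columns carry the entries of `A`. -/
def liftMat {F : Type*} [Field F] {n k : ℕ} (e : Fin k → Fin n) (c : Fin (n - k) → Fin n)
    (A : Matrix (Fin k) (Fin (n - k)) F) : Matrix (Fin k) (Fin n) F :=
  fun i t => (if t = e i then 1 else 0) + ∑ j, if t = c j then A i j else 0

/-!
Up to a permutation of coordinates the lifted generator matrix is `[I | A]`. Its rows are
independent, so the lifted subspace `U_A` has dimension `k`. The rows of `[I | A] - [I | B]`
are those of `[0 | A - B]`, hence `U_A + U_B = U_A + rowspace [0 | A - B]`; this sum is direct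
because a vector of `U_A` vanishing on the pivots is zero. Therefore
`dim (U_A + U_B) = k + rank (A - B)`, `dim (U_A ∩ U_B) = k - rank (A - B)` and
`d_S(U_A, U_B) = 2 rank (A - B)`. In particular `U_A = U_B` forces `A = B`.
-/

open Function Submodule

theorem Matrix.eq_zero_of_rank_eq_zero {m n F : Type*} [Fintype m] [Fintype n] [Field F]
    {A : Matrix m n F} (h : A.rank = 0) : A = 0 := by
  rw [rank_eq_finrank_span_row, finrank_eq_zero, span_eq_bot] at h
  ext i j
  exact congrFun (h _ (Set.mem_range_self i)) j

theorem Submodule.span_range_sup_span_range_eq_sup_sub {R M ι : Type*} [Ring R]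
    [AddCommGroup M] [Module R M] (u v : ι → M) :
    span R (Set.range u) ⊔ span R (Set.range v) =
      span R (Set.range u) ⊔ span R (Set.range (u - v)) := by
  have hu : ∀ i, u i ∈ span R (Set.range u) := fun i => subset_span (Set.mem_range_self i)
  apply le_antisymm <;> refine sup_le le_sup_left (span_le.2 ?_) <;> rintro _ ⟨i, rfl⟩
  · rw [show v i = u i - (u - v) i by simp]
    exact sub_mem (mem_sup_left (hu i)) (mem_sup_right (subset_span (Set.mem_range_self i)))
  · exact sub_mem (mem_sup_left (hu i)) (mem_sup_right (subset_span (Set.mem_range_self i)))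

theorem Finset.sum_ite_eq_extend {α β M : Type*} [Fintype α] [AddCommMonoid M] {f : α → β}
    (hf : Injective f) (x : α → M) (b : β) [∀ a, Decidable (b = f a)] :
    ∑ a, (if b = f a then x a else 0) = extend f x 0 b := by
  by_cases hb : ∃ a, f a = b
  · obtain ⟨a, rfl⟩ := hb
    rw [hf.extend_apply, Finset.sum_eq_single a (fun a' _ ha' => if_neg (hf.ne ha'.symm))
      (by simp)]
    simp
  · rw [extend_apply' _ _ _ hb, Pi.zero_apply]
    exact Finset.sum_eq_zero fun a _ => if_neg fun h => hb ⟨a, h.symm⟩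

theorem sdist_self {F : Type*} [Field F] {n : ℕ} (U : Submodule F (Fin n → F)) :
    sdist U U = 0 := by
  rw [sdist, sup_idem, inf_idem, Nat.sub_self]

abbrev liftedSubspace {F : Type*} [Field F] {n k : ℕ} (e : Fin k → Fin n)
    (c : Fin (n - k) → Fin n) (A : Matrix (Fin k) (Fin (n - k)) F) : Submodule F (Fin n → F) :=
  span F (Set.range (liftMat e c A))

section liftMat

variable {F : Type*} [Field F] {n k : ℕ} {e : Fin k → Fin n} {c : Fin (n - k) → Fin n}

theorem liftMat_row (hc : Injective c) (A : Matrix (Fin k) (Fin (n - k)) F) (i : Fin k) :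
    liftMat e c A i = Pi.single (e i) 1 + extend c (A i) 0 := by
  funext t
  simp [liftMat, Pi.single_apply, Finset.sum_ite_eq_extend hc]

theorem liftMat_apply_pivot (he : Injective e) (hc : Injective c) (hec : ∀ i j, e i ≠ c j)
    (A : Matrix (Fin k) (Fin (n - k)) F) (i i' : Fin k) :
    liftMat e c A i (e i') = (Pi.single i 1 : Fin k → F) i' := by
  rw [liftMat_row hc, Pi.add_apply, extend_apply' _ _ _ fun ⟨j, h⟩ => hec i' j h.symm]
  simp [Pi.single_apply, he.eq_iff, eq_comm]

theorem liftMat_sub_liftMat (hc : Injective c) (A B : Matrix (Fin k) (Fin (n - k)) F)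
    (i : Fin k) :
    liftMat e c A i - liftMat e c B i = ExtendByZero.linearMap F c ((A - B) i) := by
  rw [liftMat_row hc, liftMat_row hc, add_sub_add_left_eq_sub]
  exact (map_sub (ExtendByZero.linearMap F c) (A i) (B i)).symm

theorem sum_smul_liftMat_apply_pivot (he : Injective e) (hc : Injective c)
    (hec : ∀ i j, e i ≠ c j) (A : Matrix (Fin k) (Fin (n - k)) F) (w : Fin k → F)
    (i : Fin k) :
    (∑ i', w i' • liftMat e c A i') (e i) = w i := by
  simp [Finset.sum_apply, liftMat_apply_pivot he hc hec, Pi.single_apply]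

theorem linearIndependent_liftMat (he : Injective e) (hc : Injective c)
    (hec : ∀ i j, e i ≠ c j) (A : Matrix (Fin k) (Fin (n - k)) F) :
    LinearIndependent F (liftMat e c A) :=
  Fintype.linearIndependent_iff.2 fun w hw i => by
    simpa [sum_smul_liftMat_apply_pivot he hc hec] using congrFun hw (e i)

theorem finrank_liftedSubspace (he : Injective e) (hc : Injective c) (hec : ∀ i j, e i ≠ c j)
    (A : Matrix (Fin k) (Fin (n - k)) F) :
    Module.finrank F (liftedSubspace e c A) = k := by
  rw [finrank_span_eq_card (linearIndependent_liftMat he hc hec A), Fintype.card_fin]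

theorem eq_sum_of_mem_liftedSubspace (he : Injective e) (hc : Injective c)
    (hec : ∀ i j, e i ≠ c j) (A : Matrix (Fin k) (Fin (n - k)) F) {x : Fin n → F}
    (hx : x ∈ liftedSubspace e c A) :
    x = ∑ i, x (e i) • liftMat e c A i := by
  obtain ⟨w, rfl⟩ := (mem_span_range_iff_exists_fun F).1 hx
  simp only [sum_smul_liftMat_apply_pivot he hc hec]

theorem liftedSubspace_inf_map_extend_eq_bot (he : Injective e) (hc : Injective c)
    (hec : ∀ i j, e i ≠ c j) (A : Matrix (Fin k) (Fin (n - k)) F)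
    (W : Submodule F (Fin (n - k) → F)) :
    liftedSubspace e c A ⊓ W.map (ExtendByZero.linearMap F c) = ⊥ := by
  refine (Submodule.eq_bot_iff _).2 fun x ⟨hxA, hxW⟩ => ?_
  obtain ⟨y, -, rfl⟩ := mem_map.1 hxW
  have hpivot : ∀ i, extend c y 0 (e i) = 0 := fun i =>
    extend_apply' _ _ _ fun ⟨j, h⟩ => hec i j h.symm
  rw [eq_sum_of_mem_liftedSubspace he hc hec A hxA]
  simp [hpivot]

theorem liftedSubspace_sup_eq (hc : Injective c) (A B : Matrix (Fin k) (Fin (n - k)) F) :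
    liftedSubspace e c A ⊔ liftedSubspace e c B =
      liftedSubspace e c A ⊔
        (span F (Set.range (A - B).row)).map (ExtendByZero.linearMap F c) := by
  refine (span_range_sup_span_range_eq_sup_sub (liftMat e c A) (liftMat e c B)).trans ?_
  rw [map_span, ← Set.range_comp]
  congr
  funext i
  exact liftMat_sub_liftMat hc A B i

theorem finrank_liftedSubspace_sup (he : Injective e) (hc : Injective c)
    (hec : ∀ i j, e i ≠ c j) (A B : Matrix (Fin k) (Fin (n - k)) F) :
    Module.finrank F ↥(liftedSubspace e c A ⊔ liftedSubspace e c B) = k + (A - B).rank := by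
  have hsum := finrank_sup_add_finrank_inf_eq (liftedSubspace e c A)
    ((span F (Set.range (A - B).row)).map (ExtendByZero.linearMap F c))
  rwa [liftedSubspace_inf_map_extend_eq_bot he hc hec, finrank_bot, add_zero,
    finrank_liftedSubspace he hc hec,
    ← (equivMapOfInjective _ (extend_injective hc 0) _).finrank_eq,
    ← Matrix.rank_eq_finrank_span_row, ← liftedSubspace_sup_eq hc] at hsum

theorem sdist_liftedSubspace (he : Injective e) (hc : Injective c) (hec : ∀ i j, e i ≠ c j)
    (A B : Matrix (Fin k) (Fin (n - k)) F) :
    sdist (liftedSubspace e c A) (liftedSubspace e c B) = 2 * (A - B).rank := by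
  have hsum := finrank_sup_add_finrank_inf_eq (liftedSubspace e c A) (liftedSubspace e c B)
  rw [finrank_liftedSubspace he hc hec, finrank_liftedSubspace he hc hec,
    finrank_liftedSubspace_sup he hc hec] at hsum
  rw [sdist, finrank_liftedSubspace_sup he hc hec]
  omega

end liftMat

theorem lifted_FDRMC_is_CDC_general {F : Type*} [Field F] {n k d : ℕ}
    (e : Fin k → Fin n) (c : Fin (n - k) → Fin n)
    (he : StrictMono e) (hc : StrictMono c) (hec : ∀ i j, e i ≠ c j)
    (C : Finset (Matrix (Fin k) (Fin (n - k)) F))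
    (hdist : ∀ A ∈ C, ∀ B ∈ C, A ≠ B → d ≤ (A - B).rank) :
    (∀ A ∈ C, Module.finrank F ↥(Submodule.span F (Set.range (liftMat e c A))) = k) ∧
    Set.InjOn (fun A : Matrix (Fin k) (Fin (n - k)) F =>
      Submodule.span F (Set.range (liftMat e c A))) ↑C ∧
    (∀ A ∈ C, ∀ B ∈ C, A ≠ B →
      2 * d ≤ sdist (Submodule.span F (Set.range (liftMat e c A)))
        (Submodule.span F (Set.range (liftMat e c B)))) := by
  have hsdist := sdist_liftedSubspace (F := F) he.injective hc.injective hec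
  refine ⟨fun A _ => finrank_liftedSubspace he.injective hc.injective hec A,
    fun A _ B _ hAB => ?_, fun A hA B hB hAB => ?_⟩
  · have hrank := hsdist A B
    rw [show liftedSubspace e c A = liftedSubspace e c B from hAB, sdist_self] at hrank
    exact sub_eq_zero.1 (Matrix.eq_zero_of_rank_eq_zero (by omega))
  · rw [hsdist]
    exact Nat.mul_le_mul_left 2 (hdist A hA B hB hAB)

/-- Lifting a Ferrers diagram rank-metric code yields a constant dimension code
(Etzion–Silberstein). Fix an identifying vector of weight `k` and length `n`, given by a
strictly monotone enumeration `e` of its pivot positions and `c` of its non-pivot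
positions (with disjoint ranges). Let `C ⊆ F_q^{k×(n-k)}` be an `(F, M, d)_q` FDRMC for
the corresponding Ferrers diagram, i.e. `A i j = 0` whenever column `c j` lies before the
pivot `e i` of row `i`, and distinct codewords have rank distance at least `d`. Then the
lifted subspaces `rowspace(liftMat e c A)`, `A ∈ C`, are pairwise distinct `k`-dimensional
subspaces of `F_q^n` with pairwise subspace distance at least `2d`: an `(n, M, 2d, {k})_q`
constant dimension code. -/
theorem lifted_FDRMC_is_CDC {F : Type*} [Field F] [Fintype F] {n k d : ℕ}
    (e : Fin k → Fin n) (c : Fin (n - k) → Fin n)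
    (he : StrictMono e) (hc : StrictMono c) (hec : ∀ i j, e i ≠ c j)
    (C : Finset (Matrix (Fin k) (Fin (n - k)) F))
    (hsupp : ∀ A ∈ C, ∀ i j, c j < e i → A i j = 0)
    (hdist : ∀ A ∈ C, ∀ B ∈ C, A ≠ B → d ≤ (A - B).rank) :
    (∀ A ∈ C, Module.finrank F ↥(Submodule.span F (Set.range (liftMat e c A))) = k) ∧
    Set.InjOn (fun A : Matrix (Fin k) (Fin (n - k)) F =>
      Submodule.span F (Set.range (liftMat e c A))) ↑C ∧
    (∀ A ∈ C, ∀ B ∈ C, A ≠ B →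
      2 * d ≤ sdist (Submodule.span F (Set.range (liftMat e c A)))
        (Submodule.span F (Set.range (liftMat e c B)))) :=
  lifted_FDRMC_is_CDC_general e c he hc hec C hdist
end

section
/- With K1^{(t)} and K2^{(s)} as in the mixed dimension construction, if B is a k-dimensional subspace of F_q^n with dim(B ∩ K1^{(t)}) ≥ δ and dim(B ∩ K2^{(s)}) ≥ δ for all t ∈ T1 and s ∈ T2, then d_S(B, U) ≥ 2δ for every codeword U of C1 ∪ C2. -/
lemma sdist_key {F : Type*} [Field F] {n k δ : ℕ}
    (B U K : Submodule F (Fin n → F))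
    (hB : Module.finrank F ↥B = k) (hU : Module.finrank F ↥U = k)
    (hUK : U ⊓ K = ⊥) (hBK : δ ≤ Module.finrank F ↥(B ⊓ K)) :
    2 * δ ≤ sdist B U := by
  have h1 : Module.finrank F ↥(B ⊔ U) + Module.finrank F ↥(B ⊓ U)
      = Module.finrank F ↥B + Module.finrank F ↥U :=
    Submodule.finrank_sup_add_finrank_inf_eq B U
  have hbot : (B ⊓ U) ⊓ (B ⊓ K) = ⊥ := by
    rw [← le_bot_iff, ← hUK]
    exact le_inf (inf_le_left.trans inf_le_right) (inf_le_right.trans inf_le_right)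
  have h2 : Module.finrank F ↥((B ⊓ U) ⊔ (B ⊓ K)) + Module.finrank F ↥((B ⊓ U) ⊓ (B ⊓ K))
      = Module.finrank F ↥(B ⊓ U) + Module.finrank F ↥(B ⊓ K) :=
    Submodule.finrank_sup_add_finrank_inf_eq _ _
  rw [hbot, finrank_bot] at h2
  have h3 : Module.finrank F ↥((B ⊓ U) ⊔ (B ⊓ K)) ≤ Module.finrank F ↥B :=
    Submodule.finrank_mono (sup_le inf_le_left inf_le_left)
  unfold sdist
  omega

/-- Sufficient condition for inserting a subspace into the mixed dimension construction.
For `t ∈ T1` let `K1 t` be the auxiliary subspace intersecting every codeword of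
`C1 t` trivially, and similarly `K2 s` for `s ∈ T2`; all codewords of `C1 t` and `C2 s`
are `k`-dimensional. If `B` is a `k`-dimensional subspace of `F_q^n` with
`dim(B ∩ K1 t) ≥ δ` for all `t ∈ T1` and `dim(B ∩ K2 s) ≥ δ` for all `s ∈ T2`, then
`d_S(B, U) ≥ 2δ` for every codeword `U` of `C1 ∪ C2`. -/
theorem insert_condition_mixed_dimension {F : Type*} [Field F] [Fintype F] {n k δ : ℕ}
    (T1 T2 : Finset ℕ)
    (K1 K2 : ℕ → Submodule F (Fin n → F))
    (C1 C2 : ℕ → Set (Submodule F (Fin n → F)))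
    (hC1 : ∀ t ∈ T1, ∀ U ∈ C1 t, Module.finrank F ↥U = k ∧ U ⊓ K1 t = ⊥)
    (hC2 : ∀ s ∈ T2, ∀ U ∈ C2 s, Module.finrank F ↥U = k ∧ U ⊓ K2 s = ⊥)
    (B : Submodule F (Fin n → F)) (hB : Module.finrank F ↥B = k)
    (hBK1 : ∀ t ∈ T1, δ ≤ Module.finrank F ↥(B ⊓ K1 t))
    (hBK2 : ∀ s ∈ T2, δ ≤ Module.finrank F ↥(B ⊓ K2 s)) :
    (∀ t ∈ T1, ∀ U ∈ C1 t, 2 * δ ≤ sdist B U) ∧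
    (∀ s ∈ T2, ∀ U ∈ C2 s, 2 * δ ≤ sdist B U) := by
  constructor
  · intro t ht U hU
    obtain ⟨h1, h2⟩ := hC1 t ht U hU
    exact sdist_key B U (K1 t) hB h1 h2 (hBK1 t ht)
  · intro s hs U hU
    obtain ⟨h1, h2⟩ := hC2 s hs U hU
    exact sdist_key B U (K2 s) hB h1 h2 (hBK2 s hs)
end
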